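/- arXiv:2307.06077 — 6 statements merged into one kernel-verified Lean document; each statement's English description precedes it below -/
import Mathlib

section
/- For committee elections with disjoint attributes, where C is partitioned into disjoint groups C_1, …, C_z with lower quotas ℓ_r and upper quotas u_r and committee size k, the downward-closed family 𝓕 = {W ⊆ C : W can be extended to a set W'' of size k with ℓ_r ≤ |W'' ∩ C_r| ≤ u_r for each r, and |W ∩ C_r| ≤ u_r for each r} satisfies the matroid exchange property, assuming at least one such size-k set exists. -/
/-!
Every committee containing `W` that meets the lower quotas has at least
`|W| + ∑ r, (l r - |W ∩ C_r|)` members, and when a valid size-`k` committee exists, `W` is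
feasible exactly when it respects the upper quotas and this bound is at most `k`. For this
relaxed family the exchange property is a counting argument. Given `|X| < |Y|`, some group `r`
has `|X ∩ C_r| < |Y ∩ C_r|`; adding an element of `(Y \ X) ∩ C_r` keeps the upper quotas and
leaves the bound unchanged if `X` is below its lower quota in `r`, raising it by one otherwise.
If every such move raised the bound while the bound for `X` was already `k`, then the total
shortfall of `X` would be at most that of `Y`, and `|X| < |Y|` would push the bound for `Y`
above `k`. Completing a relaxed-feasible set to a committee is the same exchange step, taken
repeatedly against a valid size-`k` committee.
-/

/-- Downward-closed feasibility for committee elections with disjoint attributes: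
`W` respects all upper quotas and can be extended to a size-`k` committee
satisfying all lower and upper quotas. -/
def Feas3 {C : Type*} [DecidableEq C] {z : ℕ} (Cg : Fin z → Finset C)
    (l u : Fin z → ℕ) (k : ℕ) (W : Finset C) : Prop :=
  (∀ r, (W ∩ Cg r).card ≤ u r) ∧
  ∃ W'' : Finset C, W ⊆ W'' ∧ W''.card = k ∧
    ∀ r, l r ≤ (W'' ∩ Cg r).card ∧ (W'' ∩ Cg r).card ≤ u r

open Finset Function

lemma exists_exchange_index {ι : Type*} [Fintype ι] (l n m : ι → ℕ) {k : ℕ}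
    (hlt : ∑ r, n r < ∑ r, m r)
    (hn : ∑ r, n r + ∑ r, (l r - n r) ≤ k) (hm : ∑ r, m r + ∑ r, (l r - m r) ≤ k) :
    ∃ r, n r < m r ∧ (n r < l r ∨ ∑ r, n r + ∑ r, (l r - n r) < k) := by
  by_contra! h
  obtain ⟨r, -, hr⟩ := exists_lt_of_sum_lt hlt
  have hk := (h r hr).2
  have hdeficit : ∑ r, (l r - n r) ≤ ∑ r, (l r - m r) := sum_le_sum fun s _ => by
    by_cases hs : n s < m s
    · have := (h s hs).1
      omega
    · omega
  omega

section Partition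

variable {C ι : Type*} [DecidableEq C] [Fintype ι] {Cg : ι → Finset C}

lemma sum_card_inter_eq_card (hdisj : Pairwise (Disjoint on Cg))
    (hcover : ∀ x, ∃ r, x ∈ Cg r) (W : Finset C) :
    ∑ r, (W ∩ Cg r).card = W.card := by
  rw [← card_biUnion fun r _ s _ hrs => (hdisj hrs).mono inter_subset_right inter_subset_right]
  congr 1
  ext x
  simpa using fun _ => hcover x

/-- The truncated subtraction `l r - |W ∩ C_r|` is the shortfall of `W` in group `r`. -/
def minCompletionSize (Cg : ι → Finset C) (l : ι → ℕ) (W : Finset C) : ℕ :=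
  W.card + ∑ r, (l r - (W ∩ Cg r).card)

lemma minCompletionSize_eq_card_iff {l : ι → ℕ} {W : Finset C} :
    minCompletionSize Cg l W = W.card ↔ ∀ r, l r ≤ (W ∩ Cg r).card := by
  simp [minCompletionSize, sum_eq_zero_iff, Nat.sub_eq_zero_iff_le]

lemma minCompletionSize_le_card_of_subset (hdisj : Pairwise (Disjoint on Cg))
    (hcover : ∀ x, ∃ r, x ∈ Cg r) {l : ι → ℕ} {W W'' : Finset C} (hsub : W ⊆ W'')
    (hlower : ∀ r, l r ≤ (W'' ∩ Cg r).card) :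
    minCompletionSize Cg l W ≤ W''.card := by
  rw [minCompletionSize, ← sum_card_inter_eq_card hdisj hcover W,
    ← sum_card_inter_eq_card hdisj hcover W'', ← sum_add_distrib]
  refine sum_le_sum fun r _ => ?_
  have := card_le_card (inter_subset_inter_right hsub : W ∩ Cg r ⊆ W'' ∩ Cg r)
  have := hlower r
  omega

lemma minCompletionSize_insert_add (hdisj : Pairwise (Disjoint on Cg)) {l : ι → ℕ}
    {W : Finset C} {c : C} {r : ι} (hc : c ∈ Cg r) (hcW : c ∉ W) :
    minCompletionSize Cg l (insert c W) + (l r - (W ∩ Cg r).card) =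
      minCompletionSize Cg l W + 1 + (l r - ((W ∩ Cg r).card + 1)) := by
  classical
  have hrest : ∑ s ∈ univ.erase r, (l s - (insert c W ∩ Cg s).card) =
      ∑ s ∈ univ.erase r, (l s - (W ∩ Cg s).card) := sum_congr rfl fun s hs => by
    rw [insert_inter_of_notMem (disjoint_left.mp (hdisj (ne_of_mem_erase hs).symm) hc)]
  have hcount : (insert c W ∩ Cg r).card = (W ∩ Cg r).card + 1 := by
    rw [insert_inter_of_mem hc, card_insert_of_notMem fun h => hcW (mem_of_mem_inter_left h)]
  rw [minCompletionSize, minCompletionSize, card_insert_of_notMem hcW,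
    ← add_sum_erase _ _ (mem_univ r), ← add_sum_erase _ _ (mem_univ r), hrest, hcount]
  omega

theorem exists_insert_of_card_lt (hdisj : Pairwise (Disjoint on Cg))
    (hcover : ∀ x, ∃ r, x ∈ Cg r) {l u : ι → ℕ} {k : ℕ} {X Y : Finset C}
    (hXu : ∀ r, (X ∩ Cg r).card ≤ u r) (hYu : ∀ r, (Y ∩ Cg r).card ≤ u r)
    (hX : minCompletionSize Cg l X ≤ k) (hY : minCompletionSize Cg l Y ≤ k)
    (hlt : X.card < Y.card) :
    ∃ c ∈ Y \ X, (∀ r, (insert c X ∩ Cg r).card ≤ u r) ∧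
      minCompletionSize Cg l (insert c X) ≤ k := by
  have hsumX := sum_card_inter_eq_card hdisj hcover X
  have hsumY := sum_card_inter_eq_card hdisj hcover Y
  have hdemX : minCompletionSize Cg l X = X.card + ∑ r, (l r - (X ∩ Cg r).card) := rfl
  have hdemY : minCompletionSize Cg l Y = Y.card + ∑ r, (l r - (Y ∩ Cg r).card) := rfl
  obtain ⟨r, hrlt, hcost⟩ := exists_exchange_index l (fun r => (X ∩ Cg r).card)
    (fun r => (Y ∩ Cg r).card) (k := k) (by omega) (by omega) (by omega)
  obtain ⟨c, hcY, hcX⟩ := exists_mem_notMem_of_card_lt_card hrlt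
  have hcr := mem_of_mem_inter_right hcY
  have hcnX : c ∉ X := fun h => hcX (mem_inter_of_mem h hcr)
  refine ⟨c, mem_sdiff.mpr ⟨mem_of_mem_inter_left hcY, hcnX⟩, fun s => ?_, ?_⟩
  · by_cases hs : s = r
    · subst hs
      rw [insert_inter_of_mem hcr, card_insert_of_notMem hcX]
      exact hrlt.trans_le (hYu s)
    · rw [insert_inter_of_notMem (disjoint_left.mp (hdisj (Ne.symm hs)) hcr)]
      exact hXu s
  · have := minCompletionSize_insert_add (l := l) hdisj hcr hcnX
    omega

theorem exists_superset_card_eq_of_minCompletionSize_le (hdisj : Pairwise (Disjoint on Cg))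
    (hcover : ∀ x, ∃ r, x ∈ Cg r) {l u : ι → ℕ} {k : ℕ} {W W0 : Finset C}
    (hW0k : W0.card = k) (hW0 : ∀ r, l r ≤ (W0 ∩ Cg r).card ∧ (W0 ∩ Cg r).card ≤ u r)
    (hWu : ∀ r, (W ∩ Cg r).card ≤ u r) (hW : minCompletionSize Cg l W ≤ k) :
    ∃ W'' : Finset C, W ⊆ W'' ∧ W''.card = k ∧
      ∀ r, l r ≤ (W'' ∩ Cg r).card ∧ (W'' ∩ Cg r).card ≤ u r := by
  obtain ⟨d, hd⟩ : ∃ d, W.card + d = k := ⟨k - W.card, by grind [minCompletionSize]⟩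
  induction d generalizing W with
  | zero =>
    have hlower := minCompletionSize_eq_card_iff.mp (by grind [minCompletionSize] :
      minCompletionSize Cg l W = W.card)
    exact ⟨W, subset_rfl, hd, fun r => ⟨hlower r, hWu r⟩⟩
  | succ d ih =>
    have hW0dem : minCompletionSize Cg l W0 ≤ k :=
      (minCompletionSize_eq_card_iff.mpr fun r => (hW0 r).1).trans_le hW0k.le
    obtain ⟨c, hc, hcu, hcdem⟩ :=
      exists_insert_of_card_lt hdisj hcover hWu (fun r => (hW0 r).2) hW hW0dem (by omega)
    obtain ⟨W'', hsub, hW''⟩ := ih hcu hcdem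
      (by rw [card_insert_of_notMem (mem_sdiff.mp hc).2]; omega)
    exact ⟨W'', (subset_insert c W).trans hsub, hW''⟩

end Partition

theorem feas3_iff {C : Type*} [DecidableEq C] {z : ℕ} {Cg : Fin z → Finset C} {l u : Fin z → ℕ}
    {k : ℕ} (hdisj : Pairwise (Disjoint on Cg)) (hcover : ∀ x, ∃ r, x ∈ Cg r)
    (hexists : ∃ W0 : Finset C, W0.card = k ∧
      ∀ r, l r ≤ (W0 ∩ Cg r).card ∧ (W0 ∩ Cg r).card ≤ u r) {W : Finset C} :
    Feas3 Cg l u k W ↔ (∀ r, (W ∩ Cg r).card ≤ u r) ∧ minCompletionSize Cg l W ≤ k := by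
  obtain ⟨W0, hW0k, hW0⟩ := hexists
  exact ⟨fun ⟨hWu, _, hsub, hcard, hW''⟩ =>
      ⟨hWu, hcard ▸ minCompletionSize_le_card_of_subset hdisj hcover hsub fun r => (hW'' r).1⟩,
    fun ⟨hWu, hW⟩ =>
      ⟨hWu, exists_superset_card_eq_of_minCompletionSize_le hdisj hcover hW0k hW0 hWu hW⟩⟩

theorem stmt3_general {C : Type*} [DecidableEq C] {z : ℕ} (Cg : Fin z → Finset C)
    (l u : Fin z → ℕ) (k : ℕ)
    (hdisj : ∀ r s, r ≠ s → Disjoint (Cg r) (Cg s))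
    (hcover : ∀ x : C, ∃ r, x ∈ Cg r)
    (hexists : ∃ W0 : Finset C, W0.card = k ∧
      ∀ r, l r ≤ (W0 ∩ Cg r).card ∧ (W0 ∩ Cg r).card ≤ u r)
    (X Y : Finset C) (hX : Feas3 Cg l u k X) (hY : Feas3 Cg l u k Y)
    (hlt : X.card < Y.card) :
    ∃ c ∈ Y \ X, Feas3 Cg l u k (insert c X) := by
  have hpart : Pairwise (Disjoint on Cg) := fun r s => hdisj r s
  rw [feas3_iff hpart hcover hexists] at hX hY
  obtain ⟨c, hc, hcX⟩ := exists_insert_of_card_lt hpart hcover hX.1 hY.1 hX.2 hY.2 hlt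
  exact ⟨c, hc, (feas3_iff hpart hcover hexists).mpr hcX⟩

/-- Committee elections with disjoint attributes satisfy the matroid exchange property. -/
theorem stmt3 {C : Type*} [DecidableEq C] {z : ℕ} (Cg : Fin z → Finset C)
    (l u : Fin z → ℕ) (k : ℕ)
    (hdisj : ∀ r s, r ≠ s → Disjoint (Cg r) (Cg s))
    (hcover : ∀ x : C, ∃ r, x ∈ Cg r)
    (hlu : ∀ r, l r ≤ u r)
    (hexists : ∃ W0 : Finset C, W0.card = k ∧
      ∀ r, l r ≤ (W0 ∩ Cg r).card ∧ (W0 ∩ Cg r).card ≤ u r)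
    (X Y : Finset C) (hX : Feas3 Cg l u k X) (hY : Feas3 Cg l u k Y)
    (hlt : X.card < Y.card) :
    ∃ c ∈ Y \ X, Feas3 Cg l u k (insert c X) :=
  stmt3_general Cg l u k hdisj hcover hexists X Y hX hY hlt
end

section
/- Let (C, N, 𝓕) be an election with matroid feasibility constraints (downward closed, satisfying the exchange property), and let W ∈ 𝓕 satisfy EJR. Then for each group of voters S ⊆ N that deserves ℓ candidates, the average number of approved candidates in W over S satisfies (1/|S|) · Σ_{i∈S} |A_i ∩ W| ≥ (ℓ − 1)/2. -/
/-- A group `S` deserves `ℓ` candidates. -/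
def Deserves {C N : Type*} [DecidableEq C] [Fintype N] (F : Set (Finset C))
    (A : N → Finset C) (S : Finset N) (ℓ : ℕ) : Prop :=
  ∀ T ∈ F, (∃ X : Finset C, (∀ i ∈ S, X ⊆ A i) ∧ ℓ ≤ X.card ∧ T ∪ X ∈ F) ∨
    (S.card : ℝ) / (Fintype.card N : ℝ) > (ℓ : ℝ) / ((T.card : ℝ) + (ℓ : ℝ))

/-- `W` satisfies EJR: every nonempty group deserving `ℓ` candidates contains a voter
approving at least `ℓ` members of `W`. -/
def SatisfiesEJR {C N : Type*} [DecidableEq C] [Fintype N] (F : Set (Finset C))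
    (A : N → Finset C) (W : Finset C) : Prop :=
  ∀ ℓ : ℕ, ∀ S : Finset N, S.Nonempty → Deserves F A S ℓ →
    ∃ i ∈ S, ℓ ≤ (A i ∩ W).card

/-!
For `1 ≤ j ≤ ℓ` let `S_j` be the voters of `S` with fewer than `j` approved winners. By EJR,
`S_j` does not deserve `j`: some `T ∈ F` admits no `j` further candidates approved by all of
`S_j` (a fortiori by all of `S`), while `|S_j| / n ≤ j / (|T| + j)`. By the augmentation property,
removing a candidate from an independent set enlarges its possible common extensions by at most
one, so deleting `ℓ - j` members of `T` gives a `T'` with no common extension of size `ℓ`; as `S`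
deserves `ℓ`, `|S| / n > ℓ / (|T| + j)`. Hence `ℓ |S_j| ≤ j |S|`, and summing the sizes
`|S| - |S_j|` of the complementary level sets over `j` bounds `∑ i ∈ S, |A_i ∩ W|` from below.
-/

open Finset

section Matroid

variable {C : Type*} [DecidableEq C] {F : Set (Finset C)}

theorem exists_augment_subset_union
    (hex : ∀ X ∈ F, ∀ Y ∈ F, X.card < Y.card → ∃ c ∈ Y \ X, insert c X ∈ F)
    {I J : Finset C} (hI : I ∈ F) (hJ : J ∈ F) :
    ∃ K ∈ F, I ⊆ K ∧ K ⊆ I ∪ J ∧ J.card ≤ K.card := by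
  induction hk : J.card - I.card generalizing I with
  | zero => exact ⟨I, hI, subset_rfl, subset_union_left, by omega⟩
  | succ k ih =>
    obtain ⟨c, hc, hcI⟩ := hex I hI J hJ (by omega)
    rw [mem_sdiff] at hc
    obtain ⟨K, hK, hIK, hKIJ, hJK⟩ := ih hcI (by rw [card_insert_of_notMem hc.2]; omega)
    refine ⟨K, hK, (subset_insert c I).trans hIK, hKIJ.trans ?_, hJK⟩
    exact union_subset (insert_subset (mem_union_right _ hc.1) subset_union_left)
      subset_union_right

theorem exists_subset_union_mem_of_subset
    (hex : ∀ X ∈ F, ∀ Y ∈ F, X.card < Y.card → ∃ c ∈ Y \ X, insert c X ∈ F)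
    {T T' X : Finset C} (hT : T ∈ F) (hT'T : T' ⊆ T) (hX : T' ∪ X ∈ F) :
    ∃ X' ⊆ X, T ∪ X' ∈ F ∧ X.card + T'.card ≤ X'.card + T.card := by
  obtain ⟨K, hK, hTK, hKTX, hcard⟩ := exists_augment_subset_union hex hT hX
  have hKeq : T ∪ (X ∩ K) = K := by
    refine (union_subset hTK inter_subset_right).antisymm fun a ha => ?_
    have := hKTX ha
    simp only [mem_union, mem_inter] at this ⊢
    tauto
  refine ⟨X ∩ K, inter_subset_left, by rwa [hKeq], ?_⟩
  have h₁ := card_union_add_card_inter T (X ∩ K)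
  have h₂ := card_union_add_card_inter T' X
  have h₃ : (T' ∩ X).card ≤ (T ∩ (X ∩ K)).card :=
    card_le_card fun a ha => by
      rw [mem_inter] at ha ⊢
      exact ⟨hT'T ha.1, mem_inter.2 ⟨ha.2, hTK (hT'T ha.1)⟩⟩
  rw [hKeq] at h₁
  omega

end Matroid

section Election

variable {C N : Type*} [DecidableEq C] {F : Set (Finset C)} {A : N → Finset C}

def HasCommonExtension (F : Set (Finset C)) (A : N → Finset C) (S : Finset N)
    (T : Finset C) (k : ℕ) : Prop :=
  ∃ X : Finset C, (∀ i ∈ S, X ⊆ A i) ∧ k ≤ X.card ∧ T ∪ X ∈ F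

theorem HasCommonExtension.mono {S S' : Finset N} {T : Finset C} {k : ℕ} (hS : S' ⊆ S)
    (h : HasCommonExtension F A S T k) : HasCommonExtension F A S' T k :=
  let ⟨X, hXA, hk, hTX⟩ := h
  ⟨X, fun i hi => hXA i (hS hi), hk, hTX⟩

theorem exists_not_hasCommonExtension_of_not_hasCommonExtension
    (hdc : ∀ X ∈ F, ∀ Y : Finset C, Y ⊆ X → Y ∈ F)
    (hex : ∀ X ∈ F, ∀ Y ∈ F, X.card < Y.card → ∃ c ∈ Y \ X, insert c X ∈ F)
    {S : Finset N} {T : Finset C} {j ℓ : ℕ} (hT : T ∈ F)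
    (hTj : ¬HasCommonExtension F A S T j) (hℓ : HasCommonExtension F A S ∅ ℓ) (hjℓ : j ≤ ℓ) :
    ∃ T' ∈ F, T'.card + ℓ = T.card + j ∧ ¬HasCommonExtension F A S T' ℓ := by
  have hcard : ℓ ≤ T.card + j := by
    obtain ⟨Y, hYA, hYℓ, hY⟩ := hℓ
    obtain ⟨X', hX'Y, hTX', hX'⟩ :=
      exists_subset_union_mem_of_subset hex hT (empty_subset T) hY
    by_contra! h
    exact hTj ⟨X', fun i hi => hX'Y.trans (hYA i hi), by simp at hX'; omega, hTX'⟩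
  obtain ⟨T', hT'T, hT'⟩ := exists_subset_card_eq (s := T) (n := T.card + j - ℓ) (by omega)
  refine ⟨T', hdc T hT T' hT'T, by omega, ?_⟩
  rintro ⟨X, hXA, hXℓ, hT'X⟩
  obtain ⟨X', hX'X, hTX', hX'⟩ := exists_subset_union_mem_of_subset hex hT hT'T hT'X
  exact hTj ⟨X', fun i hi => hX'X.trans (hXA i hi), by omega, hTX'⟩

variable [Fintype N]

theorem natCast_div_le_natCast_div_iff {a n k t : ℕ} (hn : 0 < n) (htk : 0 < t + k) :
    (a : ℝ) / n ≤ (k : ℝ) / ((t : ℝ) + k) ↔ a * (t + k) ≤ k * n := by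
  rw [div_le_div_iff₀ (by positivity) (by exact_mod_cast htk)]
  norm_cast

theorem Deserves.hasCommonExtension_empty {S : Finset N} {ℓ : ℕ}
    (hdes : Deserves F A S ℓ) (hF : ∅ ∈ F) (hS : S.Nonempty) :
    HasCommonExtension F A S ∅ ℓ := by
  rcases Nat.eq_zero_or_pos ℓ with rfl | hℓ
  · exact ⟨∅, fun _ _ => empty_subset _, le_rfl, by simpa using hF⟩
  refine (hdes ∅ hF).resolve_right fun hgt => ?_
  have hn : (0 : ℝ) < Fintype.card N := by
    exact_mod_cast hS.card_pos.trans_le (card_le_univ S)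
  rw [card_empty, Nat.cast_zero, zero_add, div_self (by positivity), gt_iff_lt,
    one_lt_div hn] at hgt
  exact (card_le_univ S).not_gt (by exact_mod_cast hgt)

theorem card_filter_card_inter_lt_mul_le
    (hdc : ∀ X ∈ F, ∀ Y : Finset C, Y ⊆ X → Y ∈ F)
    (hex : ∀ X ∈ F, ∀ Y ∈ F, X.card < Y.card → ∃ c ∈ Y \ X, insert c X ∈ F)
    {W : Finset C} (hEJR : SatisfiesEJR F A W) {S : Finset N} {ℓ : ℕ}
    (hdes : Deserves F A S ℓ) {j : ℕ} (hjℓ : j ≤ ℓ) :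
    #{i ∈ S | #(A i ∩ W) < j} * ℓ ≤ j * #S := by
  set S' := {i ∈ S | #(A i ∩ W) < j}
  rcases S'.eq_empty_or_nonempty with hS' | ⟨i₀, hi₀⟩
  · simp [hS']
  have hj : 0 < j := by have := (mem_filter.1 hi₀).2; omega
  have hS : S.Nonempty := ⟨i₀, (mem_filter.1 hi₀).1⟩
  have hS'_not : ¬Deserves F A S' j := fun hD =>
    let ⟨i, hi, hij⟩ := hEJR j S' ⟨i₀, hi₀⟩ hD
    (mem_filter.1 hi).2.not_ge hij
  simp only [Deserves, not_forall, not_or, gt_iff_lt, not_lt] at hS'_not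
  obtain ⟨T, hT, hTj, hratio⟩ := hS'_not
  obtain ⟨T', hT', hcard, hT'ℓ⟩ := exists_not_hasCommonExtension_of_not_hasCommonExtension
    hdc hex hT (fun h => hTj (h.mono (filter_subset _ _)))
    (hdes.hasCommonExtension_empty (hdc T hT ∅ (empty_subset T)) hS) hjℓ
  have hgt := (hdes T' hT').resolve_left hT'ℓ
  have hn : 0 < Fintype.card N := hS.card_pos.trans_le (card_le_univ S)
  rw [natCast_div_le_natCast_div_iff hn (by omega)] at hratio
  rw [gt_iff_lt, ← not_le, natCast_div_le_natCast_div_iff hn (by omega), not_le, hcard] at hgt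
  refine Nat.le_of_mul_le_mul_right ?_ (show 0 < #T + j by omega)
  calc #S' * ℓ * (#T + j) = #S' * (#T + j) * ℓ := by ring
    _ ≤ j * Fintype.card N * ℓ := Nat.mul_le_mul_right _ hratio
    _ = j * (ℓ * Fintype.card N) := by ring
    _ ≤ j * (#S * (#T + j)) := Nat.mul_le_mul_left _ hgt.le
    _ = j * #S * (#T + j) := by ring

end Election

theorem mul_card_le_two_mul_sum_add_card {ι : Type*} (f : ι → ℕ) (S : Finset ι) (ℓ : ℕ)
    (h : ∀ j ≤ ℓ, #{i ∈ S | f i < j} * ℓ ≤ j * #S) :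
    ℓ * #S ≤ 2 * ∑ i ∈ S, f i + #S := by
  have hlayer : ∑ j ∈ range ℓ, #{i ∈ S | j < f i} ≤ ∑ i ∈ S, f i := calc
    _ = ∑ i ∈ S, #{j ∈ range ℓ | j < f i} :=
      sum_card_bipartiteAbove_eq_sum_card_bipartiteBelow (fun j i => j < f i)
    _ ≤ ∑ i ∈ S, f i := sum_le_sum fun i _ =>
      (card_le_card fun j hj => mem_range.2 (mem_filter.1 hj).2).trans_eq (card_range _)
  have hlevel : ∀ j ∈ range ℓ, ℓ * #S ≤ (j + 1) * #S + ℓ * #{i ∈ S | j < f i} := by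
    intro j hj
    have hsplit := card_filter_add_card_filter_not (s := S) (fun i => f i < j + 1)
    simp only [not_lt, Nat.succ_le_iff] at hsplit
    have := h (j + 1) (mem_range.1 hj)
    nlinarith
  have hgauss : (∑ j ∈ range ℓ, (j + 1)) * 2 = ℓ * (ℓ + 1) := by
    have := sum_range_id_mul_two (ℓ + 1)
    rw [sum_range_succ'] at this
    simpa [mul_comm] using this
  have hsum := sum_le_sum hlevel
  rw [sum_const, card_range, smul_eq_mul, sum_add_distrib, ← sum_mul, ← mul_sum] at hsum
  rcases Nat.eq_zero_or_pos ℓ with rfl | hℓ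
  · simp
  refine Nat.le_of_mul_le_mul_left ?_ hℓ
  nlinarith [Nat.mul_le_mul_left ℓ hlayer]

theorem stmt8_general {C N : Type*} [DecidableEq C] [Fintype N]
    (F : Set (Finset C)) (A : N → Finset C)
    (hdc : ∀ X ∈ F, ∀ Y : Finset C, Y ⊆ X → Y ∈ F)
    (hex : ∀ X ∈ F, ∀ Y ∈ F, X.card < Y.card → ∃ c ∈ Y \ X, insert c X ∈ F)
    (W : Finset C) (hEJR : SatisfiesEJR F A W)
    (S : Finset N) (hS : S.Nonempty) (ℓ : ℕ) (hdes : Deserves F A S ℓ) :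
    ((ℓ : ℝ) - 1) / 2 ≤ (1 / (S.card : ℝ)) * ∑ i ∈ S, ((A i ∩ W).card : ℝ) := by
  have hsum : ℓ * #S ≤ 2 * ∑ i ∈ S, #(A i ∩ W) + #S :=
    mul_card_le_two_mul_sum_add_card _ S ℓ fun j hj =>
      card_filter_card_inter_lt_mul_le hdc hex hEJR hdes hj
  have hSpos : (0 : ℝ) < #S := by exact_mod_cast hS.card_pos
  rw [one_div, inv_mul_eq_div, le_div_iff₀ hSpos, div_mul_eq_mul_div, div_le_iff₀ two_pos]
  have : (ℓ : ℝ) * #S ≤ 2 * ∑ i ∈ S, (#(A i ∩ W) : ℝ) + #S := by exact_mod_cast hsum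
  linarith

/-- Under matroid constraints, an EJR outcome gives each group deserving `ℓ`
candidates an average of at least `(ℓ-1)/2` approved candidates. -/
theorem stmt8 {C N : Type*} [DecidableEq C] [Fintype N]
    (F : Set (Finset C)) (A : N → Finset C)
    (hne : F.Nonempty) (hdc : ∀ X ∈ F, ∀ Y : Finset C, Y ⊆ X → Y ∈ F)
    (hex : ∀ X ∈ F, ∀ Y ∈ F, X.card < Y.card → ∃ c ∈ Y \ X, insert c X ∈ F)
    (W : Finset C) (hW : W ∈ F) (hEJR : SatisfiesEJR F A W)
    (S : Finset N) (hS : S.Nonempty) (ℓ : ℕ) (hdes : Deserves F A S ℓ) :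
    ((ℓ : ℝ) - 1) / 2 ≤ (1 / (S.card : ℝ)) * ∑ i ∈ S, ((A i ∩ W).card : ℝ) :=
  stmt8_general F A hdc hex W hEJR S hS ℓ hdes
end

section
/- In the proof of Proposition 2 (average satisfaction for EJR under matroid constraints), the following key lemma holds: if S deserves ℓ candidates in an election with matroid constraints, and S' ⊆ S satisfies |S'| ≥ |S| − i·|S|/ℓ for some natural number i ∈ {0,1,…,ℓ}, then S' deserves ℓ − i candidates. -/
/-!
Remove `i` elements from `T` to get `T'` and ask what `S` deserves at `T'`. If some `X` with
`|X| ≥ ℓ` satisfies `T' ∪ X ∈ F`, the exchange property extends `T` inside `T ∪ X` to an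
independent set of size at least `|T' ∪ X|`; this adds at least `ℓ - i` elements of `X` to `T`.
Otherwise `|S|/n > ℓ/(|T'| + ℓ)`, and shrinking `S` to `S'` scales the left side by at least
`(ℓ - i)/ℓ`, while `|T'| + ℓ = |T| + (ℓ - i)`.
-/

open Finset

section Augmentation

variable {C : Type*} [DecidableEq C] {F : Set (Finset C)}

theorem exists_mem_superset_subset_union_card_le
    (hex : ∀ X ∈ F, ∀ Y ∈ F, X.card < Y.card → ∃ c ∈ Y \ X, insert c X ∈ F)
    {T Y : Finset C} (hT : T ∈ F) (hY : Y ∈ F) :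
    ∃ Z ∈ F, T ⊆ Z ∧ Z ⊆ T ∪ Y ∧ Y.card ≤ Z.card := by
  by_cases hle : Y.card ≤ T.card
  · exact ⟨T, hT, subset_rfl, subset_union_left, hle⟩
  obtain ⟨c, hc, hcT⟩ := hex T hT Y hY (by omega)
  obtain ⟨Z, hZ, hcTZ, hZY, hYZ⟩ := exists_mem_superset_subset_union_card_le hex hcT hY
  refine ⟨Z, hZ, (subset_insert c T).trans hcTZ, ?_, hYZ⟩
  rwa [insert_union, insert_eq_of_mem (mem_union_right T (mem_sdiff.1 hc).1)] at hZY
termination_by Y.card - T.card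
decreasing_by rw [card_insert_of_notMem (mem_sdiff.1 hc).2]; omega

theorem exists_subset_union_mem_of_union_mem
    (hex : ∀ X ∈ F, ∀ Y ∈ F, X.card < Y.card → ∃ c ∈ Y \ X, insert c X ∈ F)
    {T T' X : Finset C} (hT : T ∈ F) (hT'T : T' ⊆ T) (hT'X : T' ∪ X ∈ F) :
    ∃ X' ⊆ X, T ∪ X' ∈ F ∧ X.card + T'.card ≤ X'.card + T.card := by
  obtain ⟨Z, hZ, hTZ, hZT, hcard⟩ := exists_mem_superset_subset_union_card_le hex hT hT'X
  have hZ_eq : T ∪ X ∩ Z = Z := by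
    refine Subset.antisymm (union_subset hTZ inter_subset_right) fun z hz => ?_
    have := hZT hz
    simp only [mem_union, mem_inter] at this ⊢
    rcases this with h | h | h
    exacts [Or.inl h, Or.inl (hT'T h), Or.inr ⟨h, hz⟩]
  have hinter : T' ∩ X ⊆ T ∩ (X ∩ Z) := fun z hz => by
    rw [mem_inter] at hz
    exact mem_inter.2 ⟨hT'T hz.1, mem_inter.2 ⟨hz.2, hTZ (hT'T hz.1)⟩⟩
  refine ⟨X ∩ Z, inter_subset_left, by rwa [hZ_eq], ?_⟩
  have h1 := card_union_add_card_inter T' X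
  have h2 := card_union_add_card_inter T (X ∩ Z)
  rw [hZ_eq] at h2
  have := card_le_card hinter
  omega

end Augmentation

theorem sub_div_lt_div_of_div_lt {s s' n t ℓ i : ℝ} (hn : 0 ≤ n) (ht : 0 ≤ t) (hi : 0 ≤ i)
    (hiℓ : i < ℓ) (hs' : s - i * s / ℓ ≤ s') (h : ℓ / (t + ℓ) < s / n) :
    (ℓ - i) / (t + ℓ) < s' / n := by
  have hℓ : 0 < ℓ := hi.trans_lt hiℓ
  have hn' : 0 < n := by
    rcases hn.eq_or_lt with rfl | hn'
    · rw [div_zero] at h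
      exact absurd h (not_lt.2 (by positivity))
    · exact hn'
  rw [div_lt_div_iff₀ (by positivity) hn'] at h ⊢
  have hs'ℓ : s * (ℓ - i) ≤ s' * ℓ := by
    have := mul_le_mul_of_nonneg_right hs' hℓ.le
    rwa [sub_mul, div_mul_cancel₀ _ hℓ.ne', mul_comm i, ← mul_sub] at this
  nlinarith [mul_lt_mul_of_pos_left h (sub_pos.2 hiℓ),
    mul_le_mul_of_nonneg_right hs'ℓ (by positivity : 0 ≤ t + ℓ)]

theorem deserves_zero {C N : Type*} [DecidableEq C] [Fintype N] (F : Set (Finset C))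
    (A : N → Finset C) (S : Finset N) : Deserves F A S 0 :=
  fun T hT => Or.inl ⟨∅, fun _ _ => empty_subset _, le_rfl, by rwa [union_empty]⟩

theorem stmt9_general {C N : Type*} [DecidableEq C] [Fintype N]
    (F : Set (Finset C)) (A : N → Finset C)
    (hdc : ∀ X ∈ F, ∀ Y : Finset C, Y ⊆ X → Y ∈ F)
    (hex : ∀ X ∈ F, ∀ Y ∈ F, X.card < Y.card → ∃ c ∈ Y \ X, insert c X ∈ F)
    (S S' : Finset N) (ℓ i : ℕ) (hi : i ≤ ℓ) (hsub : S' ⊆ S)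
    (hcard : (S.card : ℝ) - (i : ℝ) * (S.card : ℝ) / (ℓ : ℝ) ≤ (S'.card : ℝ))
    (hdes : Deserves F A S ℓ) :
    Deserves F A S' (ℓ - i) := by
  rcases hi.eq_or_lt with rfl | hiℓ
  · rw [Nat.sub_self]
    exact deserves_zero F A S'
  intro T hT
  obtain ⟨T', hT'T, hT'card⟩ := exists_subset_card_eq (Nat.sub_le T.card i)
  rcases hdes T' (hdc T hT T' hT'T) with ⟨X, hXA, hXcard, hT'X⟩ | hfrac
  · obtain ⟨X', hX'X, hTX', hX'card⟩ := exists_subset_union_mem_of_union_mem hex hT hT'T hT'X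
    exact Or.inl ⟨X', fun j hj => hX'X.trans (hXA j (hsub hj)), by omega, hTX'⟩
  -- `T'` is empty when `i > |T|`, and then `hfrac` would give `|S| > n`.
  have hiT : i ≤ T.card := by
    by_contra! hTi
    rw [show T'.card = 0 by omega, Nat.cast_zero, zero_add,
      div_self (Nat.cast_ne_zero.2 (by omega))] at hfrac
    exact hfrac.not_ge (div_le_one_of_le₀ (by exact_mod_cast S.card_le_univ) (by positivity))
  right
  have hden : (T.card : ℝ) + ((ℓ - i : ℕ) : ℝ) = T'.card + ℓ := by
    rw [hT'card, Nat.cast_sub hi, Nat.cast_sub hiT]; ring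
  rw [gt_iff_lt, hden, Nat.cast_sub hi]
  exact sub_div_lt_div_of_div_lt (by positivity) (by positivity) (by positivity)
    (by exact_mod_cast hiℓ) hcard hfrac

/-- Key lemma of Proposition 2: under matroid constraints, if `S` deserves `ℓ`
candidates and `S' ⊆ S` with `|S'| ≥ |S| − i·|S|/ℓ` for `i ∈ {0,…,ℓ}`,
then `S'` deserves `ℓ − i` candidates. -/
theorem stmt9 {C N : Type*} [DecidableEq C] [Fintype N]
    (F : Set (Finset C)) (A : N → Finset C)
    (hne : F.Nonempty) (hdc : ∀ X ∈ F, ∀ Y : Finset C, Y ⊆ X → Y ∈ F)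
    (hex : ∀ X ∈ F, ∀ Y ∈ F, X.card < Y.card → ∃ c ∈ Y \ X, insert c X ∈ F)
    (S S' : Finset N) (ℓ i : ℕ) (hi : i ≤ ℓ) (hsub : S' ⊆ S)
    (hcard : (S.card : ℝ) - (i : ℝ) * (S.card : ℝ) / (ℓ : ℝ) ≤ (S'.card : ℝ))
    (hdes : Deserves F A S ℓ) :
    Deserves F A S' (ℓ - i) :=
  stmt9_general F A hdc hex S S' ℓ i hi hsub hcard hdes
end

section
/- For every approval election (C, N, 𝓕) with nonempty downward-closed feasibility family, there exists a feasible outcome W ∈ 𝓕 satisfying extended justified representation (EJR): for each ℓ ∈ ℕ and each group S ⊆ N that deserves ℓ candidates, some voter i ∈ S approves at least ℓ candidates in W. -/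
open Finset

theorem sum_pow_lt_pow_of_card_le {ι : Type*} {R : Finset ι} {f : ι → ℕ} {n ℓ : ℕ}
    (hR : R.card ≤ n) (hf : ∀ q ∈ R, f q < ℓ) : ∑ q ∈ R, (n + 1) ^ f q < (n + 1) ^ ℓ := by
  cases ℓ with
  | zero =>
    obtain rfl : R = ∅ := eq_empty_of_forall_notMem fun q hq => Nat.not_lt_zero _ (hf q hq)
    simp
  | succ ℓ =>
    calc ∑ q ∈ R, (n + 1) ^ f q
        ≤ ∑ _q ∈ R, (n + 1) ^ ℓ :=
          sum_le_sum fun q hq => Nat.pow_le_pow_right n.succ_pos (Nat.lt_succ_iff.mp (hf q hq))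
      _ = R.card * (n + 1) ^ ℓ := by rw [sum_const, smul_eq_mul]
      _ ≤ n * (n + 1) ^ ℓ := Nat.mul_le_mul_right _ hR
      _ < (n + 1) ^ (ℓ + 1) := by rw [pow_succ, mul_comm]; gcongr; exact lt_add_one n

theorem exists_forall_mul_card_le {α : Type*} {P : Finset (Finset α × ℕ)} (hne : P.Nonempty)
    (hP : ∀ p ∈ P, p.1.Nonempty) : ∃ p ∈ P, ∀ q ∈ P, q.2 * p.1.card ≤ p.2 * q.1.card := by
  obtain ⟨p, hp, hmax⟩ := P.exists_max_image (fun q => (q.2 : ℚ) / q.1.card) hne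
  refine ⟨p, hp, fun q hq => ?_⟩
  have h := hmax q hq
  rw [div_le_div_iff₀ (by exact_mod_cast (hP q hq).card_pos)
    (by exact_mod_cast (hP p hp).card_pos)] at h
  exact_mod_cast h

section Election

variable {C N : Type*} [DecidableEq C] [Fintype N] {F : Set (Finset C)} {A : N → Finset C}

theorem sum_card_le_card_of_pairwiseDisjoint {P : Finset (Finset N × ℕ)}
    (hP : (P : Set (Finset N × ℕ)).PairwiseDisjoint Prod.fst) :
    ∑ p ∈ P, p.1.card ≤ Fintype.card N := by
  classical
  exact card_biUnion hP ▸ card_le_univ _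

theorem card_mul_sum_le_of_forall_mul_card_le {P : Finset (Finset N × ℕ)} {S : Finset N} {ℓ : ℕ}
    (hP : (P : Set (Finset N × ℕ)).PairwiseDisjoint Prod.fst)
    (hmax : ∀ q ∈ P, q.2 * S.card ≤ ℓ * q.1.card) :
    S.card * ∑ q ∈ P, q.2 ≤ Fintype.card N * ℓ :=
  calc S.card * ∑ q ∈ P, q.2
      = ∑ q ∈ P, q.2 * S.card := by rw [mul_sum]; simp only [mul_comm]
    _ ≤ ∑ q ∈ P, ℓ * q.1.card := sum_le_sum hmax
    _ = ℓ * ∑ q ∈ P, q.1.card := (mul_sum _ _ _).symm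
    _ ≤ ℓ * Fintype.card N := Nat.mul_le_mul_left _ (sum_card_le_card_of_pairwiseDisjoint hP)
    _ = Fintype.card N * ℓ := mul_comm _ _

theorem Deserves.exists_of_card_mul_le {S : Finset N} {ℓ : ℕ} {T : Finset C}
    (h : Deserves F A S ℓ) (hT : T ∈ F) (hℓ : 0 < ℓ)
    (hS : S.card * (T.card + ℓ) ≤ Fintype.card N * ℓ) :
    ∃ X : Finset C, (∀ i ∈ S, X ⊆ A i) ∧ ℓ ≤ X.card ∧ T ∪ X ∈ F := by
  refine (h T hT).resolve_right fun hbig => ?_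
  rcases (Fintype.card N).eq_zero_or_pos with h0 | hn
  · rw [h0, Nat.cast_zero, div_zero] at hbig
    exact hbig.not_ge (by positivity)
  rw [gt_iff_lt, div_lt_div_iff₀ (by positivity) (by exact_mod_cast hn)] at hbig
  have hS' : (S.card : ℝ) * (T.card + ℓ) ≤ Fintype.card N * ℓ := by exact_mod_cast hS
  linarith

theorem Deserves.le_card_univ [Fintype C] {S : Finset N} {ℓ : ℕ} (h : Deserves F A S ℓ)
    (hempty : ∅ ∈ F) : ℓ ≤ Fintype.card C := by
  rcases Nat.eq_zero_or_pos ℓ with rfl | hℓ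
  · exact Nat.zero_le _
  obtain ⟨X, -, hX, -⟩ := h.exists_of_card_mul_le hempty hℓ
    (by rw [card_empty, zero_add]; exact Nat.mul_le_mul_right _ (card_le_univ S))
  exact hX.trans (card_le_univ X)

variable (F A) in
structure IsDisjointDeserving (P : Finset (Finset N × ℕ)) : Prop where
  nonempty : ∀ p ∈ P, p.1.Nonempty
  pos : ∀ p ∈ P, 0 < p.2
  deserves : ∀ p ∈ P, Deserves F A p.1 p.2
  pairwiseDisjoint : (P : Set (Finset N × ℕ)).PairwiseDisjoint Prod.fst

namespace IsDisjointDeserving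

variable {P Q : Finset (Finset N × ℕ)}

theorem mono (hP : IsDisjointDeserving F A P) (hQ : Q ⊆ P) : IsDisjointDeserving F A Q where
  nonempty p hp := hP.nonempty p (hQ hp)
  pos p hp := hP.pos p (hQ hp)
  deserves p hp := hP.deserves p (hQ hp)
  pairwiseDisjoint := hP.pairwiseDisjoint.subset (coe_subset.mpr hQ)

theorem card_le (hP : IsDisjointDeserving F A P) : P.card ≤ Fintype.card N := by
  classical
  exact (card_le_card_biUnion hP.pairwiseDisjoint hP.nonempty).trans (card_le_univ _)

theorem exists_serving (hdc : ∀ X ∈ F, ∀ Y : Finset C, Y ⊆ X → Y ∈ F) (hempty : ∅ ∈ F)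
    (hP : IsDisjointDeserving F A P) :
    ∃ W ∈ F, W.card ≤ ∑ p ∈ P, p.2 ∧ ∀ p ∈ P, ∀ i ∈ p.1, p.2 ≤ (A i ∩ W).card := by
  classical
  induction P using Finset.strongInduction with
  | H P ih =>
  rcases P.eq_empty_or_nonempty with rfl | hne
  · exact ⟨∅, hempty, by simp, by simp⟩
  obtain ⟨p, hp, hpmax⟩ := exists_forall_mul_card_le hne hP.nonempty
  obtain ⟨W, hWF, hWcard, hW⟩ := ih (P.erase p) (erase_ssubset hp) (hP.mono (erase_subset p P))
  have hsum : W.card + p.2 ≤ ∑ q ∈ P, q.2 := by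
    rw [← sum_erase_add P _ hp]
    exact Nat.add_le_add_right hWcard _
  have hratio : p.1.card * (W.card + p.2) ≤ Fintype.card N * p.2 :=
    (Nat.mul_le_mul_left _ hsum).trans
      (card_mul_sum_le_of_forall_mul_card_le hP.pairwiseDisjoint hpmax)
  obtain ⟨X, hXA, hXcard, hXF⟩ :=
    (hP.deserves p hp).exists_of_card_mul_le hWF (hP.pos p hp) hratio
  obtain ⟨Y, hYX, hYcard⟩ := exists_subset_card_eq hXcard
  refine ⟨W ∪ Y, hdc _ hXF _ (union_subset_union_right hYX), ?_, fun q hq i hi => ?_⟩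
  · exact (card_union_le W Y).trans (hYcard ▸ hsum)
  obtain rfl | hqp := eq_or_ne q p
  · exact hYcard ▸ card_le_card (subset_inter (hYX.trans (hXA i hi)) subset_union_right)
  · exact (hW q (mem_erase.mpr ⟨hqp, hq⟩) i hi).trans
      (card_le_card (inter_subset_inter_left subset_union_left))

theorem insert_filter_disjoint [DecidableEq N] (hP : IsDisjointDeserving F A P) {S : Finset N} {ℓ : ℕ}
    (hS : S.Nonempty) (hℓ : 0 < ℓ) (hdes : Deserves F A S ℓ) :
    IsDisjointDeserving F A (insert (S, ℓ) (P.filter fun q => Disjoint q.1 S)) := by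
  have hQ := hP.mono (filter_subset (fun q => Disjoint q.1 S) P)
  refine ⟨?_, ?_, ?_, ?_⟩
  · exact forall_mem_insert _ _ _ |>.mpr ⟨hS, hQ.nonempty⟩
  · exact forall_mem_insert _ _ _ |>.mpr ⟨hℓ, hQ.pos⟩
  · exact forall_mem_insert _ _ _ |>.mpr ⟨hdes, hQ.deserves⟩
  · rw [coe_insert]
    refine hQ.pairwiseDisjoint.insert fun q hq _ => ?_
    exact (mem_filter.mp hq).2.symm

theorem exists_le_not_disjoint_of_maximal [DecidableEq N] (hP : IsDisjointDeserving F A P)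
    (hmax : ∀ Q, IsDisjointDeserving F A Q →
      ∑ q ∈ Q, (Fintype.card N + 1) ^ q.2 ≤ ∑ p ∈ P, (Fintype.card N + 1) ^ p.2)
    {S : Finset N} {ℓ : ℕ} (hS : S.Nonempty) (hℓ : 0 < ℓ) (hdes : Deserves F A S ℓ) :
    ∃ q ∈ P, ℓ ≤ q.2 ∧ ¬Disjoint q.1 S := by
  by_contra! hsmall
  set n := Fintype.card N
  have hmet : ∑ q ∈ P.filter (fun q => ¬Disjoint q.1 S), (n + 1) ^ q.2 < (n + 1) ^ ℓ := by
    refine sum_pow_lt_pow_of_card_le (hP.mono (filter_subset _ P)).card_le fun q hq => ?_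
    obtain ⟨hqP, hqS⟩ := mem_filter.mp hq
    exact not_le.mp fun h => hqS (hsmall q hqP h)
  have hnew : (S, ℓ) ∉ P.filter fun q => Disjoint q.1 S := fun h =>
    hS.ne_empty (disjoint_self_iff_empty S |>.mp (mem_filter.mp h).2)
  have := hmax _ (hP.insert_filter_disjoint hS hℓ hdes)
  rw [sum_insert hnew, ← sum_filter_add_sum_filter_not P fun q => Disjoint q.1 S] at this
  dsimp only at this
  omega

theorem exists_maximal [Fintype C] (hempty : ∅ ∈ F) :
    ∃ P, IsDisjointDeserving F A P ∧ ∀ Q, IsDisjointDeserving F A Q →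
      ∑ q ∈ Q, (Fintype.card N + 1) ^ q.2 ≤ ∑ p ∈ P, (Fintype.card N + 1) ^ p.2 := by
  have hfin : {P | IsDisjointDeserving F A P}.Finite := by
    refine (univ ×ˢ range (Fintype.card C + 1)).powerset.finite_toSet.subset fun P hP => ?_
    refine mem_coe.mpr (mem_powerset.mpr fun p hp => mem_product.mpr ⟨mem_univ _, ?_⟩)
    exact mem_range.mpr (Nat.lt_succ_of_le ((hP.deserves p hp).le_card_univ hempty))
  have hne : {P | IsDisjointDeserving F A P}.Nonempty := ⟨∅, ⟨by simp, by simp, by simp, by simp⟩⟩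
  exact Set.exists_max_image _ _ hfin hne

end IsDisjointDeserving

end Election

/-- For every approval election with a nonempty downward-closed feasibility family,
there exists a feasible outcome satisfying EJR. -/
theorem stmt11 {C N : Type*} [DecidableEq C] [Fintype C] [Fintype N]
    (F : Set (Finset C)) (A : N → Finset C)
    (hne : F.Nonempty) (hdc : ∀ X ∈ F, ∀ Y : Finset C, Y ⊆ X → Y ∈ F) :
    ∃ W ∈ F, ∀ ℓ : ℕ, ∀ S : Finset N, S.Nonempty → Deserves F A S ℓ →
      ∃ i ∈ S, ℓ ≤ (A i ∩ W).card := by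
  classical
  obtain ⟨T, hT⟩ := hne
  have hempty : ∅ ∈ F := hdc T hT ∅ (empty_subset T)
  obtain ⟨P, hP, hmax⟩ := IsDisjointDeserving.exists_maximal (A := A) hempty
  obtain ⟨W, hWF, -, hW⟩ := hP.exists_serving hdc hempty
  refine ⟨W, hWF, fun ℓ S hS hdes => ?_⟩
  rcases Nat.eq_zero_or_pos ℓ with rfl | hℓ
  · exact ⟨hS.choose, hS.choose_spec, Nat.zero_le _⟩
  obtain ⟨q, hq, hℓq, hqS⟩ := hP.exists_le_not_disjoint_of_maximal hmax hS hℓ hdes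
  obtain ⟨i, hiq, hiS⟩ := not_disjoint_iff.mp hqS
  exact ⟨i, hiS, hℓq.trans (hW q hq i hiq)⟩
end

section
/- FJR implies EJR in approval elections: if W ∈ 𝓕 satisfies fully justified representation with respect to the approval utilities u_i(X) = |A_i ∩ X|, then W satisfies extended justified representation. -/
/-- A group `S` is `(α, β)`-cohesive with respect to utilities `u`. -/
def Cohesive {C N : Type*} [DecidableEq C] [Fintype N] (F : Set (Finset C))
    (u : N → Finset C → ℝ) (S : Finset N) (α : ℕ) (β : ℝ) : Prop :=
  ∀ T ∈ F, ∃ X : Finset C, X.card = α ∧ (∀ i ∈ S, β ≤ u i X) ∧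
    (T ∪ X ∈ F ∨
      (S.card : ℝ) / (Fintype.card N : ℝ) > (α : ℝ) / ((T.card : ℝ) + (α : ℝ)))

/-- FJR implies EJR in approval elections: if `W` satisfies FJR with respect to the
approval utilities `u i X = |A i ∩ X|`, then `W` satisfies EJR. -/
theorem stmt12 {C N : Type*} [DecidableEq C] [Fintype N]
    (F : Set (Finset C)) (A : N → Finset C)
    (hne : F.Nonempty) (hdc : ∀ X ∈ F, ∀ Y : Finset C, Y ⊆ X → Y ∈ F)
    (W : Finset C)
    (hFJR : ∀ (α : ℕ) (β : ℝ), 0 ≤ β → ∀ S : Finset N, S.Nonempty →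
      Cohesive F (fun i X => ((A i ∩ X).card : ℝ)) S α β →
      ∃ i ∈ S, β ≤ ((A i ∩ W).card : ℝ)) :
    ∀ ℓ : ℕ, ∀ S : Finset N, S.Nonempty → Deserves F A S ℓ →
      ∃ i ∈ S, ℓ ≤ (A i ∩ W).card := by
  intro ℓ S hS hdes
  rcases Nat.eq_zero_or_pos ℓ with rfl | hℓ
  · exact ⟨hS.choose, hS.choose_spec, Nat.zero_le _⟩
  -- ∅ ∈ F
  obtain ⟨c0, hc0⟩ := hne
  have hempty : (∅ : Finset C) ∈ F := hdc _ hc0 _ (Finset.empty_subset _)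
  -- get a universal X' of size ℓ approved by all of S
  have hSn : (S.card : ℝ) / (Fintype.card N : ℝ) ≤ 1 := by
    have h1 : 0 < Fintype.card N := Fintype.card_pos_iff.mpr ⟨hS.choose⟩
    rw [div_le_one (by exact_mod_cast h1)]
    exact_mod_cast S.card_le_univ.trans_eq (Finset.card_univ)
  obtain ⟨X0, hX0sub, hX0card, hX0F⟩ := (hdes ∅ hempty).resolve_right (by
    simp only [Finset.card_empty, Nat.cast_zero, zero_add]
    rw [div_self (by exact_mod_cast hℓ.ne')]
    exact not_lt.mpr hSn)
  obtain ⟨X', hX'sub, hX'card⟩ := Finset.exists_subset_card_eq hX0card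
  have hX'ap : ∀ i ∈ S, (ℓ : ℝ) ≤ ((A i ∩ X').card : ℝ) := by
    intro i hi
    rw [Finset.inter_eq_right.mpr (hX'sub.trans (hX0sub i hi)), hX'card]
  have hcoh : Cohesive F (fun i X => ((A i ∩ X).card : ℝ)) S ℓ ℓ := by
    intro T hT
    rcases hdes T hT with ⟨X, hXsub, hXcard, hTX⟩ | hbig
    · obtain ⟨X'', hX''sub, hX''card⟩ := Finset.exists_subset_card_eq hXcard
      refine ⟨X'', hX''card, ?_, Or.inl ?_⟩
      · intro i hi
        show (ℓ : ℝ) ≤ ((A i ∩ X'').card : ℝ)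
        rw [Finset.inter_eq_right.mpr (hX''sub.trans (hXsub i hi)), hX''card]
      · exact hdc _ hTX _ (Finset.union_subset_union_right hX''sub)
    · exact ⟨X', hX'card, hX'ap, Or.inr hbig⟩
  obtain ⟨i, hi, hle⟩ := hFJR ℓ ℓ (by positivity) S hS hcoh
  exact ⟨i, hi, by exact_mod_cast hle⟩
end

section
/- PAV satisfies EJR under matroid constraints: in an approval election (C, N, 𝓕) with 𝓕 a matroid, every outcome W maximizing the PAV score Σ_{i∈N} H(|W ∩ A_i|) over 𝓕 (where H(k) = Σ_{j=1}^k 1/j) satisfies extended justified representation. -/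
/-- The PAV score of `W`: `∑ᵢ H(|W ∩ Aᵢ|)` where `H(k) = ∑_{j=1}^k 1/j`. -/
noncomputable def pavScore {C N : Type*} [DecidableEq C] [Fintype N]
    (A : N → Finset C) (W : Finset C) : ℝ :=
  ∑ i : N, ∑ j ∈ Finset.range ((W ∩ A i).card), (1 : ℝ) / (j + 1)

/-!
Suppose every member of `S` approves fewer than `ℓ` winners, and let `P` be the set of
candidates approved by all of `S`. By optimality no candidate of `P \ W` can be added to `W`.
Let `D` be the winners that some candidate of `P \ W` can replace, and `B = D ∪ (W ∩ P)`.
The exchange property makes `B` a largest independent subset of `B ∪ P`, so applying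
`Deserves` to a subset of `B \ P` of size `|B| + 1 - ℓ` gives `ℓ n < |S| (|B| + 1)`.
On the other hand no swap `W - w + c` with `w ∈ D` improves the PAV score. Summed over `D`,
each member of `S` gains at least `1/ℓ` for each `w ∈ D` it does not approve, at least
`(|B| + 1 - ℓ) / ℓ` in total, while every other voter `i` loses at most `1/|W ∩ Aᵢ|` per
approved `w`, so at most `1`. Hence `|S| (|B| + 1) ≤ ℓ n`.
-/

open Finset

theorem harmonic_mono : Monotone harmonic :=
  monotone_nat_of_le_succ fun n => by
    rw [harmonic_succ]
    exact le_add_of_nonneg_right (by positivity)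

theorem harmonic_sub_inv_le {k k' : ℕ} (h : k ≤ k' + 1) :
    harmonic k - (k : ℚ)⁻¹ ≤ harmonic k' := by
  cases k with
  | zero => simpa using harmonic_mono (Nat.zero_le k')
  | succ k => simpa [harmonic_succ] using harmonic_mono (by omega : k ≤ k')

section Matroid

variable {C : Type*} [DecidableEq C] {F : Set (Finset C)}

theorem exists_augment_card_eq
    (hex : ∀ X ∈ F, ∀ Y ∈ F, X.card < Y.card → ∃ c ∈ Y \ X, insert c X ∈ F)
    {Z W : Finset C} (hZ : Z ∈ F) (hW : W ∈ F) (h : Z.card ≤ W.card) :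
    ∃ Z' ∈ F, Z ⊆ Z' ∧ Z' ⊆ Z ∪ W ∧ Z'.card = W.card := by
  obtain ⟨k, hk⟩ := Nat.exists_eq_add_of_le h
  induction k generalizing Z with
  | zero => exact ⟨Z, hZ, subset_rfl, subset_union_left, hk.symm⟩
  | succ k ih =>
    obtain ⟨c, hc, hcZ⟩ := hex Z hZ W hW (by omega)
    obtain ⟨hcW, hcZ'⟩ := mem_sdiff.1 hc
    have hcardZ : (insert c Z).card = Z.card + 1 := card_insert_of_notMem hcZ'
    obtain ⟨Z', hZ'F, hZZ', hZ'W, hcard⟩ := ih hcZ (by omega) (by omega)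
    refine ⟨Z', hZ'F, (subset_insert c Z).trans hZZ', hZ'W.trans ?_, hcard⟩
    rw [insert_union]
    exact insert_subset (mem_union_right Z hcW) subset_rfl

theorem insert_mem_or_exists_erase_insert_mem
    (hex : ∀ X ∈ F, ∀ Y ∈ F, X.card < Y.card → ∃ c ∈ Y \ X, insert c X ∈ F)
    {W B : Finset C} {c : C} (hW : W ∈ F) (hBW : B ⊆ W) (hcW : c ∉ W) (hcB : insert c B ∈ F) :
    insert c W ∈ F ∨ ∃ w ∈ W \ B, (insert c W).erase w ∈ F := by
  rcases (card_le_card hBW).eq_or_lt with hcard | hcard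
  · exact .inl (eq_of_subset_of_card_le hBW hcard.ge ▸ hcB)
  have hcB' : c ∉ B := fun h => hcW (hBW h)
  obtain ⟨Z, hZF, hBZ, hZW, hZcard⟩ :=
    exists_augment_card_eq hex hcB hW (by rw [card_insert_of_notMem hcB']; omega)
  rw [insert_union, union_eq_right.2 hBW] at hZW
  obtain ⟨w, hwW, hwZ⟩ : ∃ w ∈ insert c W, w ∉ Z :=
    not_subset.1 fun h => by
      have := card_le_card h
      rw [card_insert_of_notMem hcW] at this
      omega
  have hwc : w ≠ c := fun h => hwZ (h ▸ hBZ (mem_insert_self c B))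
  have hZeq : Z = (insert c W).erase w :=
    eq_of_subset_of_card_le (subset_erase.2 ⟨hZW, hwZ⟩)
      (by rw [card_erase_of_mem hwW, card_insert_of_notMem hcW, hZcard]; omega)
  refine .inr ⟨w, mem_sdiff.2 ⟨(mem_insert.1 hwW).resolve_left hwc, ?_⟩, hZeq ▸ hZF⟩
  exact fun hwB => hwZ (hBZ (mem_insert_of_mem hwB))

open Classical in
noncomputable def swappable (F : Set (Finset C)) (W P : Finset C) : Finset C :=
  W.filter fun w => ∃ c ∈ P \ W, (insert c W).erase w ∈ F

theorem mem_swappable {F : Set (Finset C)} {W P : Finset C} {w : C} :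
    w ∈ swappable F W P ↔ w ∈ W ∧ ∃ c ∈ P \ W, (insert c W).erase w ∈ F := by
  classical
  simp only [swappable, mem_filter]

theorem swappable_subset {W P : Finset C} : swappable F W P ⊆ W :=
  fun _ hw => (mem_swappable.1 hw).1

theorem card_le_of_subset_swappable_union
    (hex : ∀ X ∈ F, ∀ Y ∈ F, X.card < Y.card → ∃ c ∈ Y \ X, insert c X ∈ F)
    {W P Y : Finset C} (hW : W ∈ F) (hB : swappable F W P ∪ W ∩ P ∈ F)
    (hins : ∀ c ∈ P \ W, insert c W ∉ F) (hY : Y ∈ F)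
    (hYsub : Y ⊆ (swappable F W P ∪ W ∩ P) ∪ P) :
    Y.card ≤ (swappable F W P ∪ W ∩ P).card := by
  set B := swappable F W P ∪ W ∩ P
  by_contra! hlt
  obtain ⟨c, hc, hcB⟩ := hex B hB Y hY hlt
  obtain ⟨hcY, hcB'⟩ := mem_sdiff.1 hc
  have hcP : c ∈ P := (mem_union.1 (hYsub hcY)).resolve_left hcB'
  have hcW : c ∉ W := fun h => hcB' (mem_union_right _ (mem_inter.2 ⟨h, hcP⟩))
  have hBW : B ⊆ W := union_subset swappable_subset inter_subset_left
  rcases insert_mem_or_exists_erase_insert_mem hex hW hBW hcW hcB with hcW' | ⟨w, hw, hswap⟩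
  · exact hins c (mem_sdiff.2 ⟨hcP, hcW⟩) hcW'
  · obtain ⟨hwW, hwB⟩ := mem_sdiff.1 hw
    exact hwB (mem_union_left _ (mem_swappable.2 ⟨hwW, c, mem_sdiff.2 ⟨hcP, hcW⟩, hswap⟩))

end Matroid

section PAV

variable {C N : Type*} [DecidableEq C] [Fintype N]

theorem pavScore_eq_sum_harmonic (A : N → Finset C) (W : Finset C) :
    pavScore A W = ∑ i, (harmonic (W ∩ A i).card : ℝ) := by
  simp [pavScore, harmonic, one_div]

theorem card_insert_inter {W A : Finset C} {c : C} (hc : c ∉ W) :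
    (insert c W ∩ A).card = (W ∩ A).card + if c ∈ A then 1 else 0 := by
  split_ifs with hcA
  · rw [insert_inter_of_mem hcA, card_insert_of_notMem fun h => hc (mem_inter.1 h).1]
  · rw [insert_inter_of_notMem hcA, add_zero]

theorem card_erase_inter_add {W A : Finset C} {w : C} (hw : w ∈ W) :
    (W.erase w ∩ A).card + (if w ∈ A then 1 else 0) = (W ∩ A).card := by
  rw [erase_inter]
  split_ifs with hwA
  · exact card_erase_add_one (mem_inter.2 ⟨hw, hwA⟩)
  · rw [erase_eq_of_notMem fun h => hwA (mem_inter.1 h).2, add_zero]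

theorem card_erase_insert_inter_add {W A : Finset C} {c w : C} (hc : c ∉ W) (hw : w ∈ W) :
    ((insert c W).erase w ∩ A).card + (if w ∈ A then 1 else 0) =
      (W ∩ A).card + if c ∈ A then 1 else 0 := by
  rw [card_erase_inter_add (mem_insert_of_mem hw), card_insert_inter hc]

theorem pavScore_lt_insert {A : N → Finset C} {W : Finset C} {c : C} {i : N} (hc : c ∉ W)
    (hci : c ∈ A i) : pavScore A W < pavScore A (insert c W) := by
  simp only [pavScore_eq_sum_harmonic]
  refine sum_lt_sum (fun j _ => ?_) ⟨i, mem_univ i, ?_⟩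
  · exact_mod_cast harmonic_mono (by rw [card_insert_inter hc]; omega)
  · rw [card_insert_inter hc, if_pos hci, harmonic_succ]
    push_cast
    exact lt_add_of_pos_right _ (by positivity)

theorem inv_le_harmonic_erase_insert_sub {W A : Finset C} {c w : C} {ℓ : ℕ} (hc : c ∉ W)
    (hw : w ∈ W) (hcA : c ∈ A) (hℓ : (W ∩ A).card < ℓ) :
    (if w ∈ A then 0 else (ℓ : ℝ)⁻¹) ≤
      harmonic ((insert c W).erase w ∩ A).card - harmonic (W ∩ A).card := by
  have h := card_erase_insert_inter_add hc hw (A := A)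
  rw [if_pos hcA] at h
  split_ifs at h ⊢ with hwA
  · rw [show ((insert c W).erase w ∩ A).card = (W ∩ A).card by omega, sub_self]
  · rw [show ((insert c W).erase w ∩ A).card = (W ∩ A).card + 1 by omega, harmonic_succ]
    push_cast
    rw [add_sub_cancel_left]
    exact inv_anti₀ (by positivity) (by exact_mod_cast hℓ)

theorem neg_inv_le_harmonic_erase_insert_sub {W A : Finset C} {c w : C} (hc : c ∉ W)
    (hw : w ∈ W) :
    -(if w ∈ A then ((W ∩ A).card : ℝ)⁻¹ else 0) ≤
      harmonic ((insert c W).erase w ∩ A).card - harmonic (W ∩ A).card := by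
  have hk : (W ∩ A).card ≤ ((insert c W).erase w ∩ A).card + if w ∈ A then 1 else 0 := by
    rw [card_erase_insert_inter_add hc hw]
    exact Nat.le_add_right _ _
  by_cases hwA : w ∈ A
  · rw [if_pos hwA] at hk ⊢
    have : ((harmonic (W ∩ A).card - ((W ∩ A).card : ℚ)⁻¹ : ℚ) : ℝ) ≤
        harmonic ((insert c W).erase w ∩ A).card := by
      exact_mod_cast harmonic_sub_inv_le hk
    push_cast at this
    linarith
  · rw [if_neg hwA, add_zero] at hk
    rw [if_neg hwA, neg_zero, sub_nonneg]
    exact_mod_cast harmonic_mono hk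

theorem sum_card_sdiff_le_of_swaps_not_improving {A : N → Finset C} {W D : Finset C}
    {S : Finset N} {ℓ : ℕ} {f : C → C} (hDW : D ⊆ W) (hfW : ∀ w ∈ D, f w ∉ W)
    (hfA : ∀ w ∈ D, ∀ i ∈ S, f w ∈ A i) (hℓ : ∀ i ∈ S, (W ∩ A i).card < ℓ)
    (hopt : ∀ w ∈ D, pavScore A ((insert (f w) W).erase w) ≤ pavScore A W) :
    ∑ i ∈ S, (D \ A i).card + ℓ * S.card ≤ ℓ * Fintype.card N := by
  classical
  rcases Nat.eq_zero_or_pos ℓ with rfl | hℓpos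
  · obtain rfl : S = ∅ := eq_empty_of_forall_notMem fun i hi => by simpa using hℓ i hi
    simp
  set δ : C → N → ℝ := fun w i =>
    harmonic ((insert (f w) W).erase w ∩ A i).card - harmonic (W ∩ A i).card
  have htotal : ∑ i ∈ S, ∑ w ∈ D, δ w i + ∑ i ∈ Sᶜ, ∑ w ∈ D, δ w i ≤ 0 := by
    rw [sum_add_sum_compl, sum_comm]
    refine sum_nonpos fun w hw => ?_
    simpa [δ, sum_sub_distrib, pavScore_eq_sum_harmonic] using hopt w hw
  have hgain (i : N) (hi : i ∈ S) : ((D \ A i).card : ℝ) * (ℓ : ℝ)⁻¹ ≤ ∑ w ∈ D, δ w i :=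
    calc ((D \ A i).card : ℝ) * (ℓ : ℝ)⁻¹
        = ∑ w ∈ D, if w ∈ A i then 0 else (ℓ : ℝ)⁻¹ := by
          rw [sum_ite, sum_const_zero, zero_add, sum_const, filter_notMem_eq_sdiff,
            nsmul_eq_mul]
      _ ≤ _ := sum_le_sum fun w hw =>
          inv_le_harmonic_erase_insert_sub (hfW w hw) (hDW hw) (hfA w hw i hi) (hℓ i hi)
  have hloss (i : N) : -1 ≤ ∑ w ∈ D, δ w i :=
    calc (-1 : ℝ) ≤ -(((D ∩ A i).card : ℝ) * ((W ∩ A i).card : ℝ)⁻¹) := by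
          rw [neg_le_neg_iff, ← div_eq_mul_inv]
          exact div_le_one_of_le₀ (by exact_mod_cast card_le_card (inter_subset_inter_right hDW))
            (by positivity)
      _ = ∑ w ∈ D, -(if w ∈ A i then ((W ∩ A i).card : ℝ)⁻¹ else 0) := by
          rw [sum_neg_distrib, sum_ite_mem, sum_const, nsmul_eq_mul]
      _ ≤ _ := sum_le_sum fun w hw =>
          neg_inv_le_harmonic_erase_insert_sub (hfW w hw) (hDW hw)
  have hgain' := sum_le_sum hgain
  have hloss' := sum_le_sum fun i (_ : i ∈ Sᶜ) => hloss i
  rw [← sum_mul] at hgain'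
  rw [sum_const, nsmul_eq_mul, mul_neg_one, card_compl,
    Nat.cast_sub (card_le_univ S)] at hloss'
  have hmain : (∑ i ∈ S, ((D \ A i).card : ℝ)) * (ℓ : ℝ)⁻¹ ≤ Fintype.card N - S.card := by
    linarith
  rw [mul_inv_le_iff₀ (by positivity)] at hmain
  have : ((∑ i ∈ S, (D \ A i).card + ℓ * S.card : ℕ) : ℝ) ≤ (ℓ * Fintype.card N : ℕ) := by
    push_cast
    linarith
  exact_mod_cast this

theorem card_union_inter_add_one_le {W D P A : Finset C} {ℓ : ℕ} (hDW : D ⊆ W) (hPA : P ⊆ A)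
    (hℓ : (W ∩ A).card < ℓ) : (D ∪ W ∩ P).card + 1 ≤ (D \ A).card + ℓ := by
  have hinter : ((D ∪ W ∩ P) ∩ A).card ≤ (W ∩ A).card :=
    card_le_card (inter_subset_inter_right (union_subset hDW inter_subset_left))
  have hsdiff : ((D ∪ W ∩ P) \ A).card ≤ (D \ A).card := by
    refine card_le_card fun x hx => ?_
    obtain ⟨hx, hxA⟩ := mem_sdiff.1 hx
    exact mem_sdiff.2 ⟨(mem_union.1 hx).resolve_right fun h => hxA (hPA (mem_inter.1 h).2), hxA⟩
  have := card_inter_add_card_sdiff (D ∪ W ∩ P) A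
  omega

theorem card_mul_le_of_swaps_not_improving {A : N → Finset C} {W D P : Finset C}
    {S : Finset N} {ℓ : ℕ} {f : C → C} (hDW : D ⊆ W) (hPA : ∀ i ∈ S, P ⊆ A i)
    (hℓ : ∀ i ∈ S, (W ∩ A i).card < ℓ) (hfP : ∀ w ∈ D, f w ∈ P \ W)
    (hopt : ∀ w ∈ D, pavScore A ((insert (f w) W).erase w) ≤ pavScore A W) :
    S.card * ((D ∪ W ∩ P).card + 1) ≤ ℓ * Fintype.card N := by
  have hsum := sum_card_sdiff_le_of_swaps_not_improving hDW
    (fun w hw => (mem_sdiff.1 (hfP w hw)).2) (fun w hw i hi => hPA i hi (mem_sdiff.1 (hfP w hw)).1)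
    hℓ hopt
  calc S.card * ((D ∪ W ∩ P).card + 1) = ∑ i ∈ S, ((D ∪ W ∩ P).card + 1) := by
        rw [sum_const, smul_eq_mul]
    _ ≤ ∑ i ∈ S, ((D \ A i).card + ℓ) :=
        sum_le_sum fun i hi => card_union_inter_add_one_le hDW (hPA i hi) (hℓ i hi)
    _ ≤ ℓ * Fintype.card N := by rwa [sum_add_distrib, sum_const, smul_eq_mul, mul_comm]

end PAV

section Deserves

variable {C N : Type*} [DecidableEq C] [Fintype N]

theorem lt_card_mul_of_deserves {F : Set (Finset C)} {A : N → Finset C} {B P : Finset C}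
    {S : Finset N} {ℓ : ℕ} (hdc : ∀ X ∈ F, ∀ Y : Finset C, Y ⊆ X → Y ∈ F) (hB : B ∈ F)
    (hP : ∀ X : Finset C, (∀ i ∈ S, X ⊆ A i) → X ⊆ P) (hBP : (B ∩ P).card < ℓ)
    (hrank : ∀ Y ∈ F, Y ⊆ B ∪ P → Y.card ≤ B.card) (hS : S.Nonempty)
    (hdes : Deserves F A S ℓ) : ℓ * Fintype.card N < S.card * (B.card + 1) := by
  obtain ⟨T, hTBP, hTcard⟩ := exists_subset_card_eq (s := B \ P) (n := B.card + 1 - ℓ)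
    (by have := card_sdiff_add_card_inter B P; omega)
  have hTB : T ⊆ B := hTBP.trans sdiff_subset
  rcases hdes T (hdc B hB T hTB) with ⟨X, hXA, hXℓ, hTX⟩ | hbig
  · have hXP := hP X hXA
    have hcard := hrank _ hTX (union_subset_union hTB hXP)
    rw [card_union_of_disjoint (sdiff_disjoint.mono hTBP hXP)] at hcard
    omega
  · have hℓ : (0 : ℝ) < ℓ := by exact_mod_cast (Nat.zero_le _).trans_lt hBP
    have hn : (0 : ℝ) < Fintype.card N := by
      exact_mod_cast hS.card_pos.trans_le (card_le_univ S)
    rw [gt_iff_lt, div_lt_div_iff₀ (by positivity) hn] at hbig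
    have hlt : ℓ * Fintype.card N < S.card * (T.card + ℓ) := by exact_mod_cast hbig
    rw [hTcard] at hlt
    rcases le_or_gt ℓ (B.card + 1) with h | h
    · rwa [Nat.sub_add_cancel h] at hlt
    · rw [Nat.sub_eq_zero_of_le h.le, zero_add, mul_comm] at hlt
      exact absurd (Nat.mul_le_mul_right ℓ (card_le_univ S)) hlt.not_ge

end Deserves

theorem stmt13_general {C N : Type*} [DecidableEq C] [Fintype N]
    (F : Set (Finset C)) (A : N → Finset C)
    (hdc : ∀ X ∈ F, ∀ Y : Finset C, Y ⊆ X → Y ∈ F)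
    (hex : ∀ X ∈ F, ∀ Y ∈ F, X.card < Y.card → ∃ c ∈ Y \ X, insert c X ∈ F)
    (W : Finset C) (hW : W ∈ F)
    (hmax : ∀ W' ∈ F, pavScore A W' ≤ pavScore A W) :
    ∀ ℓ : ℕ, ∀ S : Finset N, S.Nonempty → Deserves F A S ℓ →
      ∃ i ∈ S, ℓ ≤ (A i ∩ W).card := by
  intro ℓ S hS hdes
  by_contra! hsmall
  have hℓ : ∀ i ∈ S, (W ∩ A i).card < ℓ := fun i hi => inter_comm (A i) W ▸ hsmall i hi
  have ⟨i₀, hi₀⟩ := hS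
  set P := S.inf' hS A
  have hPA : ∀ i ∈ S, P ⊆ A i := fun i hi => inf'_le A hi
  have hins : ∀ c ∈ P \ W, insert c W ∉ F := fun c hc hcW =>
    (hmax _ hcW).not_gt (pavScore_lt_insert (mem_sdiff.1 hc).2 (hPA i₀ hi₀ (mem_sdiff.1 hc).1))
  set D := swappable F W P
  have hBW : D ∪ W ∩ P ⊆ W := union_subset swappable_subset inter_subset_left
  have hBP : ((D ∪ W ∩ P) ∩ P).card < ℓ :=
    (card_le_card ((inter_subset_inter_right hBW).trans
      (inter_subset_inter_left (hPA i₀ hi₀)))).trans_lt (hℓ i₀ hi₀)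
  have hlt := lt_card_mul_of_deserves hdc (hdc W hW _ hBW) (fun X hX => (le_inf'_iff hS A).2 hX)
    hBP (fun Y hY => card_le_of_subset_swappable_union hex hW (hdc W hW _ hBW) hins hY) hS hdes
  choose! f hfP hf using fun w (hw : w ∈ D) => (mem_swappable.1 hw).2
  have hle := card_mul_le_of_swaps_not_improving swappable_subset hPA hℓ hfP
    fun w hw => hmax _ (hf w hw)
  exact hlt.not_ge hle

/-- PAV satisfies EJR under matroid constraints: every feasible outcome maximizing the
PAV score satisfies extended justified representation. -/
theorem stmt13 {C N : Type*} [DecidableEq C] [Fintype N]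
    (F : Set (Finset C)) (A : N → Finset C)
    (hne : F.Nonempty) (hdc : ∀ X ∈ F, ∀ Y : Finset C, Y ⊆ X → Y ∈ F)
    (hex : ∀ X ∈ F, ∀ Y ∈ F, X.card < Y.card → ∃ c ∈ Y \ X, insert c X ∈ F)
    (W : Finset C) (hW : W ∈ F)
    (hmax : ∀ W' ∈ F, pavScore A W' ≤ pavScore A W) :
    ∀ ℓ : ℕ, ∀ S : Finset N, S.Nonempty → Deserves F A S ℓ →
      ∃ i ∈ S, ℓ ≤ (A i ∩ W).card :=
  stmt13_general F A hdc hex W hW hmax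
end
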